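/- arXiv:2510.04561 — 2 statements merged into one kernel-verified Lean document; each statement's English description precedes it below -/
import Mathlib

section
/- In a graph G with maximum degree d ≥ 3, the number of connected vertex subsets of size s containing a fixed vertex v is at most n · ((d−1)·(1 + 1/(d−2))^(d−2))^s, and hence for s = ω(log n) it is at most e^(C·s) where C = ln((d−1)·(1 + 1/(d−2))^(d−2)) (for sufficiently large n and an arbitrarily small slack absorbed into C). -/
open List Finset

variable {n : ℕ} (G : SimpleGraph (Fin n)) [DecidableRel G.Adj]

/-- frontier of a list `l` inside `X` -/
def frontierF (X : Finset (Fin n)) (l : List (Fin n)) : Finset (Fin n) :=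
  X.filter (fun x => x ∉ l ∧ ∃ u ∈ l, G.Adj u x)

def explore (X : Finset (Fin n)) (v : Fin n) : ℕ → List (Fin n)
  | 0 => [v]
  | (k+1) =>
    let l := explore X v k
    if h : (frontierF G X l).Nonempty then l ++ [(frontierF G X l).min' h] else l

lemma explore_prefix (X : Finset (Fin n)) (v : Fin n) {k m : ℕ} (h : k ≤ m) :
    explore G X v k <+: explore G X v m := by
  induction m with
  | zero => simp_all
  | succ m ih =>
    rcases Nat.eq_or_lt_of_le h with rfl | h'
    · exact List.prefix_refl _
    · refine (ih (Nat.lt_succ_iff.mp h')).trans ?_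
      rw [explore]
      split
      · exact List.prefix_append _ _
      · exact List.prefix_refl _

lemma explore_ne_nil (X : Finset (Fin n)) (v : Fin n) (k : ℕ) :
    explore G X v k ≠ [] := by
  have := explore_prefix G X v (Nat.zero_le k)
  intro h; rw [h] at this; simp [explore] at this

lemma explore_head (X : Finset (Fin n)) (v : Fin n) (k : ℕ) :
    (explore G X v k).getD 0 v = v := by
  have h := explore_prefix G X v (Nat.zero_le k)
  rcases h with ⟨t, ht⟩
  rw [← ht]; simp [explore]

lemma explore_nodup (X : Finset (Fin n)) (v : Fin n) (k : ℕ) :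
    (explore G X v k).Nodup := by
  induction k with
  | zero => simp [explore]
  | succ k ih =>
    rw [explore]
    split
    · rename_i h
      have hmin := Finset.min'_mem _ h
      simp only [frontierF, Finset.mem_filter] at hmin
      simp only [List.nodup_append, List.nodup_cons, List.nodup_nil, and_true]
      exact ⟨ih, by refine ⟨by simp, fun a ha b hb hab => ?_⟩; rw [List.mem_singleton] at hb; subst hb; subst hab; exact hmin.2.1 ha⟩
    · exact ih

lemma explore_subset (X : Finset (Fin n)) (v : Fin n) (hv : v ∈ X) (k : ℕ) :
    ∀ a ∈ explore G X v k, a ∈ X := by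
  induction k with
  | zero => simp [explore, hv]
  | succ k ih =>
    rw [explore]
    split
    · rename_i h
      intro a ha
      rcases List.mem_append.mp ha with ha | ha
      · exact ih a ha
      · have hmin := Finset.min'_mem _ h
        simp only [frontierF, Finset.mem_filter] at hmin
        simp at ha; subst ha; exact hmin.1
    · exact ih

lemma explore_v_mem (X : Finset (Fin n)) (v : Fin n) (k : ℕ) :
    v ∈ explore G X v k := by
  have h := explore_prefix G X v (Nat.zero_le k)
  rcases h with ⟨t, ht⟩
  rw [← ht]; simp [explore]

lemma frontier_nonempty_of_ne (X : Finset (Fin n)) (v : Fin n)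
    (hconn : (G.induce (X : Set (Fin n))).Connected) (hv : v ∈ X)
    (l : List (Fin n)) (hvl : v ∈ l)
    {x : Fin n} (hx : x ∈ X) (hxl : x ∉ l) : (frontierF G X l).Nonempty := by
  obtain ⟨p⟩ := hconn.preconnected ⟨v, hv⟩ ⟨x, hx⟩
  let f := (SimpleGraph.Embedding.induce (G := G) (X : Set (Fin n)))
  let p' := p.map f.toHom
  have hsup : ∀ a ∈ p'.support, a ∈ X := by
    intro a ha
    rw [SimpleGraph.Walk.support_map] at ha
    obtain ⟨b, hb, rfl⟩ := List.mem_map.mp ha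
    exact b.2
  obtain ⟨dart, hdart, hfst, hsnd⟩ := p'.exists_boundary_dart {y | y ∈ l} hvl hxl
  refine ⟨dart.toProd.2, ?_⟩
  rw [frontierF, Finset.mem_filter]
  exact ⟨hsup _ (SimpleGraph.Walk.dart_snd_mem_support_of_mem_darts _ hdart),
    hsnd, dart.toProd.1, hfst, dart.adj⟩

lemma explore_length (X : Finset (Fin n)) (v : Fin n)
    (hconn : (G.induce (X : Set (Fin n))).Connected) (hv : v ∈ X) (k : ℕ) :
    (explore G X v k).length = min (k+1) X.card := by
  induction k with
  | zero =>
    have : 1 ≤ X.card := Finset.card_pos.mpr ⟨v, hv⟩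
    rw [explore]; simp only [List.length_singleton]; omega
  | succ k ih =>
    by_cases hEq : (explore G X v k).toFinset = X
    · have hfe : ¬ (frontierF G X (explore G X v k)).Nonempty := by
        rintro ⟨x, hx⟩
        rw [frontierF, Finset.mem_filter] at hx
        exact hx.2.1 (by rw [← List.mem_toFinset, hEq]; exact hx.1)
      have hlen : (explore G X v k).length = X.card := by
        rw [← List.toFinset_card_of_nodup (explore_nodup G X v k), hEq]
      rw [explore]
      simp only [dif_neg hfe]
      omega
    · obtain ⟨x, hx, hxl⟩ : ∃ x ∈ X, x ∉ explore G X v k := by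
        by_contra hc
        push_neg at hc
        apply hEq
        apply Finset.Subset.antisymm
        · intro a ha
          exact explore_subset G X v hv k a (List.mem_toFinset.mp ha)
        · intro a ha; exact List.mem_toFinset.mpr (hc a ha)
      have hne := frontier_nonempty_of_ne G X v hconn hv _ (explore_v_mem G X v k) hx hxl
      have hlt : k + 1 < X.card := by
        rcases Nat.lt_or_ge (k+1) X.card with h | h
        · exact h
        · exfalso
          apply hEq
          have hlen : (explore G X v k).length = X.card := by omega
          apply Finset.eq_of_subset_of_card_le
          · intro a ha
            exact explore_subset G X v hv k a (List.mem_toFinset.mp ha)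
          · rw [List.toFinset_card_of_nodup (explore_nodup G X v k), hlen]
      rw [explore]
      simp only [dif_pos hne, List.length_append]
      simp; omega

lemma explore_toFinset (X : Finset (Fin n)) (v : Fin n)
    (hconn : (G.induce (X : Set (Fin n))).Connected) (hv : v ∈ X) {s : ℕ}
    (hs : X.card = s) (hs1 : 1 ≤ s) :
    (explore G X v (s-1)).toFinset = X := by
  have hlen := explore_length G X v hconn hv (s-1)
  rw [hs] at hlen
  have : (explore G X v (s-1)).length = s := by omega
  apply Finset.eq_of_subset_of_card_le
  · intro a ha
    exact explore_subset G X v hv _ a (List.mem_toFinset.mp ha)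
  · rw [List.toFinset_card_of_nodup (explore_nodup G X v _), this, hs]

lemma explore_discovery (X : Finset (Fin n)) (v : Fin n) (k : ℕ) :
    ∀ i, 1 ≤ i → i < (explore G X v k).length →
      ∃ j < i, G.Adj ((explore G X v k).getD j v) ((explore G X v k).getD i v) := by
  induction k with
  | zero => intro i h1 h2; simp [explore] at h2; omega
  | succ k ih =>
    intro i h1 h2
    by_cases hne : (frontierF G X (explore G X v k)).Nonempty
    · have hexp : explore G X v (k+1) =
        explore G X v k ++ [(frontierF G X (explore G X v k)).min' hne] := by
        rw [explore]; simp only [dif_pos hne]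
      rcases Nat.lt_or_ge i (explore G X v k).length with hi | hi
      · obtain ⟨j, hj, hadj⟩ := ih i h1 hi
        refine ⟨j, hj, ?_⟩
        rw [hexp, List.getD_append _ _ _ _ (hj.trans hi), List.getD_append _ _ _ _ hi]
        exact hadj
      · have hieq : i = (explore G X v k).length := by
          rw [hexp] at h2; simp at h2; omega
        have hmin := Finset.min'_mem _ hne
        simp only [frontierF, Finset.mem_filter] at hmin
        obtain ⟨-, -, u, hu, hadj⟩ := hmin
        obtain ⟨j, hj, hju⟩ := List.mem_iff_getElem.mp hu
        refine ⟨j, by omega, ?_⟩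
        have e1 : (explore G X v (k+1)).getD j v = u := by
          rw [hexp, List.getD_append _ _ _ _ (by omega),
            List.getD_eq_getElem _ _ hj, hju]
        have e2 : (explore G X v (k+1)).getD i v
            = (frontierF G X (explore G X v k)).min' hne := by
          rw [hexp, hieq]
          simp
        rw [e1, e2]
        exact hadj
    · have hexp : explore G X v (k+1) = explore G X v k := by
        rw [explore]; simp only [dif_neg hne]
      rw [hexp] at h2 ⊢
      exact ih i h1 h2

def pidx (l : List (Fin n)) (x : Fin n) : ℕ :=
  l.findIdx (fun u => decide (G.Adj u x))

lemma pidx_le (l : List (Fin n)) (x : Fin n) (v : Fin n) {j : ℕ}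
    (hj : j < l.length) (hadj : G.Adj (l.getD j v) x) : pidx G l x ≤ j := by
  by_contra h
  push_neg at h
  have := List.not_of_lt_findIdx (p := fun u => decide (G.Adj u x)) (xs := l) h
  rw [List.getD_eq_getElem _ _ hj] at hadj
  simp [hadj] at this

lemma pidx_adj (l : List (Fin n)) (x : Fin n) (v : Fin n)
    (h : pidx G l x < l.length) : G.Adj (l.getD (pidx G l x) v) x := by
  have := List.findIdx_getElem (p := fun u => decide (G.Adj u x)) (xs := l) (w := h)
  rw [List.getD_eq_getElem _ _ h]
  simp only [decide_eq_true_eq] at this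
  exact this

lemma pidx_prefix {l l' : List (Fin n)} (h : l <+: l') (x : Fin n)
    (hlt : pidx G l x < l.length) : pidx G l' x = pidx G l x := by
  obtain ⟨t, rfl⟩ := h
  rw [pidx, pidx] at *
  rw [List.findIdx_append, if_pos hlt]

def parOf (v : Fin n) (l : List (Fin n)) (i : ℕ) : Fin n :=
  if i = 0 then l.getD 0 v else l.getD (pidx G l (l.getD i v)) v

def nbrL (v : Fin n) (l : List (Fin n)) (i : ℕ) : List (Fin n) :=
  ((G.neighborFinset (l.getD i v)).erase (parOf G v l i)).sort (· ≤ ·)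

def slotOf (dd : ℕ) (v : Fin n) (l : List (Fin n)) (x : Fin n) : ℕ :=
  if pidx G l x = 0 then List.idxOf x (nbrL G v l 0)
  else dd * (pidx G l x) + 1 + List.idxOf x (nbrL G v l (pidx G l x))

lemma slot_spec (X : Finset (Fin n)) (v : Fin n) {s d : ℕ}
    (hconn : (G.induce (X : Set (Fin n))).Connected) (hv : v ∈ X)
    (hcard : X.card = s) (hs : 1 ≤ s) (hdeg : ∀ w, G.degree w ≤ d)
    {x : Fin n} (hx : x ∈ X) (hxv : x ≠ v) :
    pidx G (explore G X v (s-1)) x < s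
    ∧ x ∈ nbrL G v (explore G X v (s-1)) (pidx G (explore G X v (s-1)) x)
    ∧ (nbrL G v (explore G X v (s-1)) (pidx G (explore G X v (s-1)) x)).length
        ≤ (if pidx G (explore G X v (s-1)) x = 0 then d else d - 1)
    ∧ (pidx G (explore G X v (s-1)) x ≠ 0 →
        pidx G (explore G X v (s-1))
          ((explore G X v (s-1)).getD (pidx G (explore G X v (s-1)) x) v)
          < pidx G (explore G X v (s-1)) x) := by
  set ord := explore G X v (s-1) with hord
  have hlen : ord.length = s := by
    rw [hord, explore_length G X v hconn hv, hcard]; omega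
  have hnd : ord.Nodup := explore_nodup G X v _
  have htf : ord.toFinset = X := explore_toFinset G X v hconn hv hcard hs
  have hxo : x ∈ ord := by rw [← List.mem_toFinset, htf]; exact hx
  obtain ⟨p, hp, hxp⟩ := List.mem_iff_getElem.mp hxo
  have hp1 : 1 ≤ p := by
    rcases Nat.eq_zero_or_pos p with rfl | h
    · exfalso
      apply hxv
      have := explore_head G X v (s-1)
      rw [← hord, List.getD_eq_getElem _ _ hp] at this
      rw [← hxp, this]
    · exact h
  obtain ⟨j, hj, hadj⟩ := explore_discovery G X v (s-1) p hp1 (by rw [hlen] at hp ⊢; exact hp)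
  rw [← hord] at hadj
  have hip : pidx G ord x ≤ j := by
    apply pidx_le G ord x v (by omega)
    rw [List.getD_eq_getElem _ _ hp, hxp] at hadj
    exact hadj
  have hilt : pidx G ord x < p := by omega
  have hi_len : pidx G ord x < ord.length := by omega
  set i := pidx G ord x with hidef
  have hadjux : G.Adj (ord.getD i v) x := pidx_adj G ord x v hi_len
  set u := ord.getD i v with hudef
  have hpar : (x ≠ parOf G v ord i ∧ parOf G v ord i ∈ G.neighborFinset u) ∨
      (i = 0 ∧ parOf G v ord i = v) := by
    rcases Nat.eq_zero_or_pos i with hi0 | hi1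
    · right
      refine ⟨hi0, ?_⟩
      rw [parOf, if_pos hi0]
      exact explore_head G X v (s-1)
    · left
      obtain ⟨j', hj', hadj'⟩ := explore_discovery G X v (s-1) i (by omega)
        (by rw [hlen]; omega)
      rw [← hord, ← hudef] at hadj'
      have hqle : pidx G ord u ≤ j' := pidx_le G ord u v (by omega) hadj'
      have hq_len : pidx G ord u < ord.length := by omega
      have hadjpu : G.Adj (ord.getD (pidx G ord u) v) u := pidx_adj G ord u v hq_len
      have hparval : parOf G v ord i = ord.getD (pidx G ord u) v := by
        rw [parOf, if_neg (by omega), ← hudef]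
      constructor
      · rw [hparval]
        intro hcon
        have h1 : ord[pidx G ord u]'hq_len = ord[p]'hp := by
          rw [hxp, hcon, List.getD_eq_getElem _ v hq_len]
        have := (List.Nodup.getElem_inj_iff hnd).mp h1
        omega
      · rw [hparval, SimpleGraph.mem_neighborFinset]
        exact hadjpu.symm
  have hxmem : x ∈ nbrL G v ord i := by
    rw [nbrL, Finset.mem_sort, Finset.mem_erase]
    rcases hpar with ⟨hne, -⟩ | ⟨hi0, hpv⟩
    · exact ⟨hne, by rw [SimpleGraph.mem_neighborFinset]; exact hadjux⟩
    · exact ⟨by rw [hpv]; exact hxv, by rw [SimpleGraph.mem_neighborFinset]; exact hadjux⟩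
  refine ⟨by omega, hxmem, ?_, ?_⟩
  · rw [nbrL, Finset.length_sort]
    by_cases hi0 : i = 0
    · rw [if_pos hi0]
      calc ((G.neighborFinset u).erase (parOf G v ord i)).card
          ≤ (G.neighborFinset u).card := Finset.card_erase_le
        _ = G.degree u := SimpleGraph.card_neighborFinset_eq_degree G u
        _ ≤ d := hdeg u
    · rw [if_neg hi0]
      rcases hpar with ⟨-, hmem⟩ | ⟨hi0', -⟩
      · rw [Finset.card_erase_of_mem hmem, SimpleGraph.card_neighborFinset_eq_degree]
        have := hdeg u
        omega
      · exact absurd hi0' hi0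
  · intro hi0
    obtain ⟨j', hj', hadj'⟩ := explore_discovery G X v (s-1) i (by omega)
      (by rw [hlen]; omega)
    rw [← hord, ← hudef] at hadj'
    exact lt_of_le_of_lt (pidx_le G ord u v (by omega) hadj') hj'

lemma pidx_prefix' {l l' : List (Fin n)} (h : l <+: l') (x : Fin n)
    (hlt : pidx G l' x < l.length) : pidx G l x = pidx G l' x := by
  obtain ⟨t, rfl⟩ := h
  rw [pidx, pidx] at *
  rw [List.findIdx_append] at hlt ⊢
  by_cases hc : List.findIdx (fun u => decide (G.Adj u x)) l < l.length
  · rw [if_pos hc]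
  · rw [if_neg hc] at hlt; omega

lemma getD_prefix {l l' : List (Fin n)} (h : l <+: l') {i : ℕ} (hi : i < l.length)
    (v : Fin n) : l'.getD i v = l.getD i v := by
  rw [List.getD_eq_getElem _ _ (lt_of_lt_of_le hi h.length_le),
    List.getD_eq_getElem _ _ hi, List.IsPrefix.getElem h hi]

lemma key {X Y : Finset (Fin n)} {v : Fin n} {s d : ℕ} (hd : 3 ≤ d)
    (hconnX : (G.induce (X : Set (Fin n))).Connected) (hvX : v ∈ X)
    (hcardX : X.card = s) (hs : 1 ≤ s) (hdeg : ∀ w, G.degree w ≤ d)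
    (hconnY : (G.induce (Y : Set (Fin n))).Connected) (hvY : v ∈ Y)
    (hcardY : Y.card = s)
    {l : List (Fin n)}
    (hlX : l <+: explore G X v (s-1)) (hlY : l <+: explore G Y v (s-1))
    {x y : Fin n} (hx : x ∈ X) (hxv : x ≠ v) (hy : y ∈ Y) (hyv : y ≠ v)
    (hiX : pidx G (explore G X v (s-1)) x < l.length)
    (hslot : slotOf G (d-1) v (explore G X v (s-1)) x
      = slotOf G (d-1) v (explore G Y v (s-1)) y) :
    x = y ∧ pidx G (explore G Y v (s-1)) y = pidx G (explore G X v (s-1)) x := by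
  set oX := explore G X v (s-1) with hoX
  set oY := explore G Y v (s-1) with hoY
  obtain ⟨hiXs, hxmem, hxlen, hxpar⟩ := slot_spec G X v hconnX hvX hcardX hs hdeg hx hxv
  obtain ⟨hiYs, hymem, hylen, hypar⟩ := slot_spec G Y v hconnY hvY hcardY hs hdeg hy hyv
  rw [← hoX] at hiXs hxmem hxlen hxpar
  rw [← hoY] at hiYs hymem hylen hypar
  set iX := pidx G oX x with hiXdef
  set iY := pidx G oY y with hiYdef
  set rX := List.idxOf x (nbrL G v oX iX) with hrXdef
  set rY := List.idxOf y (nbrL G v oY iY) with hrYdef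
  have hrX : rX < (nbrL G v oX iX).length := List.idxOf_lt_length_iff.mpr hxmem
  have hrY : rY < (nbrL G v oY iY).length := List.idxOf_lt_length_iff.mpr hymem
  -- decode blocks
  have hblock : iY = iX ∧ rY = rX := by
    rw [slotOf, slotOf, ← hiXdef, ← hiYdef, ← hrXdef, ← hrYdef] at hslot
    by_cases h0X : iX = 0 <;> by_cases h0Y : iY = 0
    · refine ⟨by omega, ?_⟩
      rw [if_pos h0X, if_pos h0Y] at hslot
      rw [hrXdef, hrYdef, h0X, h0Y]
      exact hslot.symm
    · exfalso
      rw [if_pos h0X, if_neg h0Y] at hslot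
      rw [if_pos h0X] at hxlen
      rw [h0X] at hrXdef
      rw [← hrXdef] at hslot
      have h1 : (d-1) ≤ (d-1) * iY := Nat.le_mul_of_pos_right _ (by omega)
      omega
    · exfalso
      rw [if_neg h0X, if_pos h0Y] at hslot
      rw [if_pos h0Y] at hylen
      rw [h0Y] at hrYdef
      rw [← hrYdef] at hslot
      have h1 : (d-1) ≤ (d-1) * iX := Nat.le_mul_of_pos_right _ (by omega)
      omega
    · rw [if_neg h0X, if_neg h0Y] at hslot
      rw [if_neg h0X] at hxlen
      rw [if_neg h0Y] at hylen
      have hrXd : rX < d - 1 := by omega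
      have hrYd : rY < d - 1 := by omega
      have hdd : 0 < d - 1 := by omega
      have heq : (d-1) * iX + rX = (d-1) * iY + rY := by omega
      have h1 : ((d-1) * iX + rX) / (d-1) = iX := by
        rw [Nat.mul_add_div hdd, Nat.div_eq_of_lt hrXd, Nat.add_zero]
      have h2 : ((d-1) * iY + rY) / (d-1) = iY := by
        rw [Nat.mul_add_div hdd, Nat.div_eq_of_lt hrYd, Nat.add_zero]
      have hii : iX = iY := by rw [← h1, ← h2, heq]
      refine ⟨hii.symm, by rw [hii] at heq; omega⟩
  obtain ⟨hii, hrr⟩ := hblock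
  -- the base vertices coincide
  have hiYl : iY < l.length := by rw [hii]; exact hiX
  have huu : oY.getD iY v = oX.getD iX v := by
    rw [hii, getD_prefix hlY hiX v, getD_prefix hlX hiX v]
  -- neighbor lists coincide
  have hnbr : nbrL G v oY iY = nbrL G v oX iX := by
    by_cases h0 : iX = 0
    · have h0Y : iY = 0 := by omega
      rw [nbrL, nbrL, h0, h0Y, parOf, parOf, if_pos rfl, if_pos rfl]
      have e1 : oX.getD 0 v = v := explore_head G X v (s-1)
      have e2 : oY.getD 0 v = v := explore_head G Y v (s-1)
      rw [e1, e2]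
    · have h0Y : iY ≠ 0 := by omega
      have hqX := hxpar h0
      have hqY := hypar h0Y
      have hu : oY.getD iY v = oX.getD iX v := huu
      set u := oX.getD iX v with hudef
      -- parent indices both below l.length, equal to pidx over l
      have hqXl : pidx G oX u < l.length := by omega
      have hqYl : pidx G oY (oY.getD iY v) < l.length := by omega
      rw [hu] at hqY hqYl
      have epX : pidx G l u = pidx G oX u := pidx_prefix' G hlX u hqXl
      have epY : pidx G l u = pidx G oY u := pidx_prefix' G hlY u hqYl
      have hpareq : oY.getD (pidx G oY u) v = oX.getD (pidx G oX u) v := by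
        rw [← epX, ← epY, getD_prefix hlX (by omega) v, getD_prefix hlY (by omega) v]
      rw [nbrL, nbrL, parOf, parOf, if_neg h0, if_neg h0Y, hu, hpareq]
  -- conclude
  refine ⟨?_, hii⟩
  rw [hrXdef, hrYdef] at hrr
  rw [hnbr] at hrr hymem
  exact ((List.idxOf_inj hymem).mp hrr).symm

def codeOf (dd : ℕ) (X : Finset (Fin n)) (v : Fin n) (s : ℕ) : Finset ℕ :=
  (X.erase v).image (slotOf G dd v (explore G X v (s-1)))

lemma code_card {X : Finset (Fin n)} {v : Fin n} {s d : ℕ} (hd : 3 ≤ d)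
    (hconn : (G.induce (X : Set (Fin n))).Connected) (hv : v ∈ X)
    (hcard : X.card = s) (hs : 1 ≤ s) (hdeg : ∀ w, G.degree w ≤ d) :
    (codeOf G (d-1) X v s).card = s - 1 := by
  rw [codeOf, Finset.card_image_of_injOn, Finset.card_erase_of_mem hv, hcard]
  intro x hx y hy hxy
  simp only [Finset.coe_erase, Set.mem_diff, Finset.mem_coe, Set.mem_singleton_iff] at hx hy
  have h1 := (slot_spec G X v hconn hv hcard hs hdeg hx.1 hx.2).1
  have hlen : (explore G X v (s-1)).length = s := by
    rw [explore_length G X v hconn hv, hcard]; omega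
  exact (key G hd hconn hv hcard hs hdeg hconn hv hcard
    (List.prefix_refl _) (List.prefix_refl _) hx.1 hx.2 hy.1 hy.2
    (by rw [hlen]; exact h1) hxy).1.symm ▸ rfl

lemma code_subset {X : Finset (Fin n)} {v : Fin n} {s d : ℕ} (hd : 3 ≤ d)
    (hconn : (G.induce (X : Set (Fin n))).Connected) (hv : v ∈ X)
    (hcard : X.card = s) (hs : 1 ≤ s) (hdeg : ∀ w, G.degree w ≤ d) :
    codeOf G (d-1) X v s ⊆ Finset.range ((d-1)*s + 1) := by
  intro t ht
  rw [codeOf, Finset.mem_image] at ht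
  obtain ⟨x, hx, rfl⟩ := ht
  rw [Finset.mem_erase] at hx
  obtain ⟨hiXs, hxmem, hxlen, -⟩ := slot_spec G X v hconn hv hcard hs hdeg hx.2 hx.1
  rw [Finset.mem_range]
  set i := pidx G (explore G X v (s-1)) x with hidef
  have hr := List.idxOf_lt_length_iff.mpr hxmem
  rw [slotOf, ← hidef]
  by_cases h0 : i = 0
  · rw [if_pos h0]
    rw [if_pos h0] at hxlen
    rw [h0] at hxlen hr
    have : (d-1) * 1 ≤ (d-1)*s := Nat.mul_le_mul_left _ hs
    omega
  · rw [if_neg h0]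
    rw [if_neg h0] at hxlen
    have h2 : (d-1) * (i+1) ≤ (d-1) * s := Nat.mul_le_mul_left _ (by omega)
    rw [Nat.mul_succ] at h2
    omega

lemma explore_stable {X : Finset (Fin n)} {v : Fin n} {s : ℕ}
    (hconn : (G.induce (X : Set (Fin n))).Connected) (hv : v ∈ X)
    (hcard : X.card = s) (hs : 1 ≤ s) {k : ℕ} (hk : s - 1 ≤ k) :
    explore G X v k = explore G X v (s-1) := by
  induction k with
  | zero => have : s - 1 = 0 := by omega
            rw [this]
  | succ k ih =>
    rcases Nat.lt_or_ge k (s-1) with h | h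
    · have : s - 1 = k + 1 := by omega
      rw [this]
    · rw [← ih h]
      have htf := explore_toFinset G X v hconn hv hcard hs
      rw [← ih h] at htf
      have hfe : ¬ (frontierF G X (explore G X v k)).Nonempty := by
        rintro ⟨z, hz⟩
        rw [frontierF, Finset.mem_filter] at hz
        exact hz.2.1 (by rw [← List.mem_toFinset, htf]; exact hz.1)
      rw [explore]
      simp only [dif_neg hfe]

lemma frontier_sub {X Y : Finset (Fin n)} {v : Fin n} {s d : ℕ} (hd : 3 ≤ d)
    (hconnX : (G.induce (X : Set (Fin n))).Connected) (hvX : v ∈ X)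
    (hcardX : X.card = s) (hs : 1 ≤ s) (hdeg : ∀ w, G.degree w ≤ d)
    (hconnY : (G.induce (Y : Set (Fin n))).Connected) (hvY : v ∈ Y)
    (hcardY : Y.card = s)
    {l : List (Fin n)} (hvl : v ∈ l)
    (hlX : l <+: explore G X v (s-1)) (hlY : l <+: explore G Y v (s-1))
    (hcode : codeOf G (d-1) X v s = codeOf G (d-1) Y v s) :
    frontierF G X l ⊆ frontierF G Y l := by
  intro z hz
  rw [frontierF, Finset.mem_filter] at hz
  obtain ⟨hzX, hzl, u, hul, huz⟩ := hz
  have hzv : z ≠ v := fun h => hzl (h ▸ hvl)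
  obtain ⟨j, hj, hju⟩ := List.mem_iff_getElem.mp hul
  have hiX : pidx G (explore G X v (s-1)) z < l.length := by
    apply lt_of_le_of_lt _ hj
    apply pidx_le G _ z v (lt_of_lt_of_le hj hlX.length_le)
    rw [getD_prefix hlX hj v, List.getD_eq_getElem _ _ hj, hju]
    exact huz
  have hslot : slotOf G (d-1) v (explore G X v (s-1)) z ∈ codeOf G (d-1) Y v s := by
    rw [← hcode, codeOf, Finset.mem_image]
    exact ⟨z, Finset.mem_erase.mpr ⟨hzv, hzX⟩, rfl⟩
  rw [codeOf, Finset.mem_image] at hslot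
  obtain ⟨y, hy, hyz⟩ := hslot
  rw [Finset.mem_erase] at hy
  obtain ⟨rfl, hpeq⟩ := key G hd hconnX hvX hcardX hs hdeg hconnY hvY hcardY
    hlX hlY hzX hzv hy.2 hy.1 hiX hyz.symm
  rw [frontierF, Finset.mem_filter]
  refine ⟨hy.2, hzl, ?_⟩
  have hpl : pidx G (explore G Y v (s-1)) z < l.length := by rw [hpeq]; exact hiX
  have hplY : pidx G (explore G Y v (s-1)) z < (explore G Y v (s-1)).length :=
    lt_of_lt_of_le hpl hlY.length_le
  refine ⟨(explore G Y v (s-1)).getD (pidx G (explore G Y v (s-1)) z) v, ?_,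
    pidx_adj G _ z v hplY⟩
  rw [getD_prefix hlY hpl v, List.getD_eq_getElem _ _ hpl]
  exact List.getElem_mem _

lemma code_inj {X Y : Finset (Fin n)} {v : Fin n} {s d : ℕ} (hd : 3 ≤ d)
    (hconnX : (G.induce (X : Set (Fin n))).Connected) (hvX : v ∈ X)
    (hcardX : X.card = s) (hs : 1 ≤ s) (hdeg : ∀ w, G.degree w ≤ d)
    (hconnY : (G.induce (Y : Set (Fin n))).Connected) (hvY : v ∈ Y)
    (hcardY : Y.card = s)
    (hcode : codeOf G (d-1) X v s = codeOf G (d-1) Y v s) : X = Y := by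
  have hstep : ∀ k, k ≤ s - 1 → explore G X v k = explore G Y v k := by
    intro k
    induction k with
    | zero => intro _; rfl
    | succ k ih =>
      intro hk
      have hck := ih (by omega)
      have hlX : explore G X v k <+: explore G X v (s-1) :=
        explore_prefix G X v (by omega)
      have hlY : explore G X v k <+: explore G Y v (s-1) := by
        rw [hck]
        exact explore_prefix G Y v (by omega)
      have hfr : frontierF G X (explore G X v k) = frontierF G Y (explore G Y v k) := by
        rw [← hck]
        apply Finset.Subset.antisymm
        · exact frontier_sub G hd hconnX hvX hcardX hs hdeg hconnY hvY hcardY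
            (explore_v_mem G X v k) hlX hlY hcode
        · exact frontier_sub G hd hconnY hvY hcardY hs hdeg hconnX hvX hcardX
            (explore_v_mem G X v k) hlY hlX hcode.symm
      have hfr' : frontierF G Y (explore G X v k) = frontierF G X (explore G X v k) := by
        rw [← hck] at hfr; exact hfr.symm
      rw [explore, explore]
      simp only [← hck, hfr']
  have hfin : explore G X v (s-1) = explore G Y v (s-1) := hstep (s-1) le_rfl
  have h1 := explore_toFinset G X v hconnX hvX hcardX hs
  have h2 := explore_toFinset G Y v hconnY hvY hcardY hs
  rw [← h1, ← h2, hfin]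

lemma count_le_choose (v : Fin n) {s d : ℕ} (hd : 3 ≤ d)
    (hdeg : ∀ w, G.degree w ≤ d) (hs : 1 ≤ s) :
    Set.ncard {X : Finset (Fin n) |
        X.card = s ∧ v ∈ X ∧ (G.induce (X : Set (Fin n))).Connected}
      ≤ ((d-1)*s+1).choose (s-1) := by
  classical
  have hle : Nat.card {X : Finset (Fin n) //
        X.card = s ∧ v ∈ X ∧ (G.induce ((X : Finset (Fin n)) : Set (Fin n))).Connected}
      ≤ Nat.card {c : Finset ℕ // c ∈ (Finset.range ((d-1)*s+1)).powersetCard (s-1)} := by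
    apply Nat.card_le_card_of_injective
      (f := fun X => (⟨codeOf G (d-1) X.1 v s, by
        rw [Finset.mem_powersetCard]
        exact ⟨code_subset G hd X.2.2.2 X.2.2.1 X.2.1 hs hdeg,
               code_card G hd X.2.2.2 X.2.2.1 X.2.1 hs hdeg⟩⟩))
    intro X Y hXY
    apply Subtype.ext
    exact code_inj G hd X.2.2.2 X.2.2.1 X.2.1 hs hdeg Y.2.2.2 Y.2.2.1 Y.2.1
      (by simpa using congrArg Subtype.val hXY)
  have e2 : Nat.card {c : Finset ℕ // c ∈ (Finset.range ((d-1)*s+1)).powersetCard (s-1)}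
      = ((d-1)*s+1).choose (s-1) := by
    rw [Nat.card_eq_fintype_card, Fintype.card_coe, Finset.card_powersetCard,
      Finset.card_range]
  rw [← Nat.card_coe_set_eq]
  rw [e2] at hle
  exact hle

lemma choose_single_le' (a b : ℕ) : (a+b).choose a * a^a * b^b ≤ (a+b)^(a+b) := by
  rw [add_pow]
  calc (a+b).choose a * a^a * b^b = a^a * b^b * (a+b).choose a := by ring
    _ = a^a * b^(a+b-a) * (a+b).choose a := by rw [show a+b-a = b by omega]
    _ ≤ ∑ i ∈ Finset.range (a+b+1), a^i * b^(a+b-i) * (a+b).choose i :=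
        Finset.single_le_sum (f := fun i => a^i * b^(a+b-i) * (a+b).choose i)
          (fun i _ => Nat.zero_le _) (Finset.mem_range.mpr (by omega))

lemma choose_single_le (N m : ℕ) (hm : m ≤ N) :
    N.choose m * m^m * (N-m)^(N-m) ≤ N^N := by
  have := choose_single_le' m (N-m)
  rwa [show m+(N-m) = N by omega] at this

lemma choose_chain {d s : ℕ} (hd : 3 ≤ d) (hs : 1 ≤ s) :
    ((d-1)*s+1).choose (s-1) ≤ 2 * (((d-1)*s).choose s) := by
  obtain ⟨t, rfl⟩ : ∃ t, s = t + 1 := ⟨s-1, by omega⟩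
  have h2s : 2*(t+1) ≤ (d-1)*(t+1) := Nat.mul_le_mul_right (t+1) (by omega)
  have hsm : t + 1 - 1 = t := by omega
  rw [hsm]
  have c1 : ((d-1)*(t+1)+1).choose t ≤ ((d-1)*(t+1)+1).choose (t+1) :=
    Nat.choose_le_succ_of_lt_half_left (by omega)
  have c2 : ((d-1)*(t+1)+1).choose (t+1)
      = ((d-1)*(t+1)).choose t + ((d-1)*(t+1)).choose (t+1) :=
    Nat.choose_succ_succ _ t
  have c3 : ((d-1)*(t+1)).choose t ≤ ((d-1)*(t+1)).choose (t+1) :=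
    Nat.choose_le_succ_of_lt_half_left (by omega)
  omega

lemma choose_le_B {d s : ℕ} (hd : 3 ≤ d) (hs : 1 ≤ s) :
    ((((d-1)*s).choose s : ℕ) : ℝ)
      ≤ (((d : ℝ) - 1) * (1 + 1 / ((d : ℝ) - 2)) ^ (d - 2)) ^ s := by
  have hd2 : (0:ℝ) < (d:ℝ) - 2 := by
    have : (3:ℝ) ≤ (d:ℝ) := by exact_mod_cast hd
    linarith
  set a : ℝ := ((d-1 : ℕ) : ℝ) with ha
  set b : ℝ := ((d-2 : ℕ) : ℝ) with hb
  have hacast : a = (d:ℝ) - 1 := by rw [ha]; push_cast [Nat.cast_sub (by omega : 1 ≤ d)]; ring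
  have hbcast : b = (d:ℝ) - 2 := by rw [hb]; push_cast [Nat.cast_sub (by omega : 2 ≤ d)]; ring
  have hb0 : (0:ℝ) < b := by rw [hbcast]; exact hd2
  have ha0 : (0:ℝ) < a := by rw [hacast]; linarith
  have hBeq : ((d : ℝ) - 1) * (1 + 1 / ((d : ℝ) - 2)) ^ (d - 2)
      = a^(d-1) / b^(d-2) := by
    rw [hacast, hbcast]
    have h1 : (1 : ℝ) + 1 / ((d:ℝ) - 2) = ((d:ℝ)-1) / ((d:ℝ)-2) := by
      field_simp; ring
    rw [h1, div_pow, show d - 1 = (d-2)+1 by omega, pow_succ]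
    field_simp
  rw [hBeq, div_pow, ← pow_mul, ← pow_mul]
  have hN : s ≤ (d-1)*s := Nat.le_mul_of_pos_left s (by omega)
  have hsub : (d-1)*s - s = (d-2)*s := by
    have h := Nat.sub_mul (d-1) 1 s
    rw [show (d:ℕ)-1-1 = d-2 from by omega] at h
    omega
  have hkey := choose_single_le ((d-1)*s) s hN
  rw [hsub] at hkey
  set C : ℝ := ((((d-1)*s).choose s : ℕ) : ℝ) with hC
  have hcast : C * (s:ℝ)^s * (b * (s:ℝ))^((d-2)*s) ≤ (a * (s:ℝ))^((d-1)*s) := by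
    rw [hC, ha, hb]
    have e1 : ((d-1:ℕ):ℝ) * (s:ℝ) = (((d-1)*s : ℕ) : ℝ) := by push_cast; ring
    have e2 : ((d-2:ℕ):ℝ) * (s:ℝ) = (((d-2)*s : ℕ) : ℝ) := by push_cast; ring
    rw [e1, e2]
    exact_mod_cast hkey
  have hs0 : (0:ℝ) < (s:ℝ) := by exact_mod_cast hs
  have hsplit : (d-1)*s = s + (d-2)*s := by
    have h := Nat.succ_pred_eq_of_pos (show 0 < d - 1 by omega)
    calc (d-1)*s = (1 + (d-2))*s := by
          congr 1
          omega
      _ = s + (d-2)*s := by rw [add_mul, one_mul]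
  rw [mul_pow, mul_pow] at hcast
  have hsF : (s:ℝ)^((d-1)*s) = (s:ℝ)^s * (s:ℝ)^((d-2)*s) := by rw [hsplit, pow_add]
  rw [hsF] at hcast
  have h2 : (C * b^((d-2)*s)) * ((s:ℝ)^s * (s:ℝ)^((d-2)*s))
      ≤ a^((d-1)*s) * ((s:ℝ)^s * (s:ℝ)^((d-2)*s)) := by
    have e3 : (C * b^((d-2)*s)) * ((s:ℝ)^s * (s:ℝ)^((d-2)*s))
        = C * (s:ℝ)^s * (b^((d-2)*s) * (s:ℝ)^((d-2)*s)) := by ring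
    rw [e3]
    exact hcast
  have h3 : C * b^((d-2)*s) ≤ a^((d-1)*s) :=
    le_of_mul_le_mul_right h2 (by positivity)
  rw [le_div_iff₀ (by positivity)]
  exact h3

/-- Counting connected subsets of size `s` containing a fixed vertex `v` in a graph
of maximum degree `d ≥ 3`, with the asymptotic `e^{C s}` bound for `s = ω(log n)`
(arbitrarily small slack `ε` absorbed into the constant). -/
theorem stmt0 {n : ℕ} (G : SimpleGraph (Fin n)) [DecidableRel G.Adj]
    (d : ℕ) (hd : 3 ≤ d) (hdeg : ∀ v, G.degree v ≤ d)
    (v : Fin n) (s : ℕ) (count : ℕ)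
    (hcount : count = Set.ncard {X : Finset (Fin n) |
      X.card = s ∧ v ∈ X ∧ (G.induce (X : Set (Fin n))).Connected}) :
    (count : ℝ) ≤ n * (((d : ℝ) - 1) * (1 + 1 / ((d : ℝ) - 2)) ^ (d - 2)) ^ s ∧
    ∀ ε : ℝ, 0 < ε → Real.log n ≤ ε * s →
      (count : ℝ) ≤ Real.exp
        ((Real.log (((d : ℝ) - 1) * (1 + 1 / ((d : ℝ) - 2)) ^ (d - 2)) + ε) * s) := by
  have hd2 : (0:ℝ) < (d:ℝ) - 2 := by
    have : (3:ℝ) ≤ (d:ℝ) := by exact_mod_cast hd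
    linarith
  set B : ℝ := ((d : ℝ) - 1) * (1 + 1 / ((d : ℝ) - 2)) ^ (d - 2) with hB
  have hB0 : 0 < B := by
    rw [hB]
    have h1 : (0:ℝ) < (d:ℝ) - 1 := by linarith
    positivity
  have hB1 : 1 ≤ B := by
    rw [hB]
    have h1 : (1:ℝ) ≤ (d:ℝ) - 1 := by linarith
    have h2 : (1:ℝ) ≤ (1 + 1 / ((d:ℝ) - 2)) := by
      have : 0 < 1 / ((d:ℝ) - 2) := by positivity
      linarith
    calc (1:ℝ) = 1 * 1 := by ring
      _ ≤ ((d:ℝ) - 1) * (1 + 1 / ((d:ℝ) - 2)) ^ (d - 2) :=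
          mul_le_mul h1 (one_le_pow₀ h2) zero_le_one (by linarith)
  have hn1 : (1:ℝ) ≤ (n:ℝ) := by exact_mod_cast Fin.pos v
  have part1 : (count : ℝ) ≤ n * B^s := by
    rcases Nat.eq_zero_or_pos s with rfl | hs
    · have hempty : {X : Finset (Fin n) |
          X.card = 0 ∧ v ∈ X ∧ (G.induce (X : Set (Fin n))).Connected} = ∅ := by
        ext X
        simp only [Set.mem_setOf_eq, Set.mem_empty_iff_false, iff_false, not_and]
        intro hc hv
        rw [Finset.card_eq_zero] at hc
        subst hc
        exact absurd hv (Finset.notMem_empty v)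
      rw [hcount, hempty, Set.ncard_empty]
      simp only [Nat.cast_zero]
      positivity
    · have h1 : count ≤ ((d-1)*s+1).choose (s-1) := by
        rw [hcount]
        exact count_le_choose G v hd hdeg hs
      by_cases hcz : count = 0
      · rw [hcz]
        simp only [Nat.cast_zero]
        positivity
      · have hne : {X : Finset (Fin n) |
            X.card = s ∧ v ∈ X ∧ (G.induce (X : Set (Fin n))).Connected}.Nonempty := by
          apply Set.nonempty_of_ncard_ne_zero
          rw [← hcount]
          exact hcz
        obtain ⟨X, hX⟩ := hne
        have hsn : s ≤ n := by
          rw [← hX.1]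
          calc X.card ≤ (Finset.univ : Finset (Fin n)).card := Finset.card_le_univ X
            _ = n := by simp
        rcases eq_or_lt_of_le (Nat.succ_le_of_lt hs) with hs1 | hs2
        · -- s = 1
          have hs1' : s = 1 := hs1.symm
          subst hs1'
          have h1' : count ≤ 1 := by simpa using h1
          calc (count : ℝ) ≤ 1 := by exact_mod_cast h1'
            _ = 1 * 1 := by ring
            _ ≤ (n:ℝ) * B^1 := by
                apply mul_le_mul hn1 (by simpa using hB1) zero_le_one (by linarith)
        · -- 2 ≤ s
          have hn2 : (2:ℝ) ≤ (n:ℝ) := by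
            have : 2 ≤ n := by omega
            exact_mod_cast this
          have h2 := choose_chain hd hs
          have h3 := choose_le_B hd hs
          calc (count : ℝ) ≤ ((((d-1)*s+1).choose (s-1) : ℕ) : ℝ) := by exact_mod_cast h1
            _ ≤ ((2 * (((d-1)*s).choose s) : ℕ) : ℝ) := by exact_mod_cast h2
            _ = 2 * ((((d-1)*s).choose s : ℕ) : ℝ) := by push_cast; ring
            _ ≤ 2 * B^s := by
                apply mul_le_mul_of_nonneg_left _ (by norm_num)
                rw [hB]
                exact h3
            _ ≤ (n:ℝ) * B^s := by
                apply mul_le_mul_of_nonneg_right hn2 (by positivity)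
  refine ⟨part1, ?_⟩
  intro ε hε hlog
  have hn0 : (0:ℝ) < (n:ℝ) := by linarith
  calc (count : ℝ) ≤ n * B^s := part1
    _ = Real.exp (Real.log n + s * Real.log B) := by
        rw [Real.exp_add, Real.exp_log hn0, Real.exp_nat_mul, Real.exp_log hB0]
    _ ≤ Real.exp ((Real.log B + ε) * s) := by
        apply Real.exp_le_exp.mpr
        have : Real.log n ≤ ε * s := hlog
        nlinarith [this]
end

section
/- In a finite graph G with maximum degree d ≥ 3, the total number of connected vertex subsets of size s is at most n · ((d−1)·(1 + 1/(d−2))^(d−2))^s. -/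
set_option linter.unusedSectionVars false

open Finset

attribute [local instance] Classical.propDecidable

variable {n : ℕ} (G : SimpleGraph (Fin n)) [DecidableRel G.Adj]

def Stp (S : Finset (Fin n)) (a b : Fin n) : Prop := G.Adj a b ∧ a ∈ S ∧ b ∈ S

def RS (S : Finset (Fin n)) : Fin n → Fin n → Prop := Relation.ReflTransGen (Stp G S)

lemma RS.symm {S : Finset (Fin n)} {a b : Fin n} (h : RS G S a b) : RS G S b a :=
  (@Relation.ReflTransGen.stdSymm _ (Stp G S) ⟨fun _ _ hpq => ⟨hpq.1.symm, hpq.2.2, hpq.2.1⟩⟩).symm _ _ h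

lemma RS.mono {S T : Finset (Fin n)} (hST : S ⊆ T) {a b : Fin n} (h : RS G S a b) :
    RS G T a b :=
  Relation.ReflTransGen.mono (fun _ _ hpq => ⟨hpq.1, hST hpq.2.1, hST hpq.2.2⟩) _ _ h

lemma RS.mem_right {S : Finset (Fin n)} {a b : Fin n} (ha : a ∈ S) (h : RS G S a b) :
    b ∈ S := by
  induction h with
  | refl => exact ha
  | tail _ h2 _ => exact h2.2.2

def Conn (S : Finset (Fin n)) : Prop := S.Nonempty ∧ ∀ a ∈ S, ∀ b ∈ S, RS G S a b

lemma walk_to_RS {S : Finset (Fin n)} :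
    ∀ {x y : (S : Set (Fin n))}, (G.induce (S : Set (Fin n))).Walk x y → RS G S x y := by
  intro x y w
  induction w with
  | nil => exact Relation.ReflTransGen.refl
  | @cons u v w huv Q ih =>
      exact Relation.ReflTransGen.head
        ⟨huv, Finset.mem_coe.mp u.2, Finset.mem_coe.mp v.2⟩ ih

lemma conn_iff (S : Finset (Fin n)) :
    (G.induce (S : Set (Fin n))).Connected ↔ Conn G S := by
  constructor
  · intro hc
    obtain ⟨⟨a₀, ha₀⟩⟩ := hc.nonempty
    refine ⟨⟨a₀, by simpa using ha₀⟩, fun a ha b hb => ?_⟩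
    obtain ⟨w⟩ := hc.preconnected ⟨a, by simpa using ha⟩ ⟨b, by simpa using hb⟩
    exact walk_to_RS G w
  · rintro ⟨⟨a₀, ha₀⟩, hr⟩
    have key : ∀ {a b : Fin n}, RS G S a b → ∀ (ha : a ∈ (S : Set (Fin n)))
        (hb : b ∈ (S : Set (Fin n))),
        (G.induce (S : Set (Fin n))).Reachable ⟨a, ha⟩ ⟨b, hb⟩ := by
      intro a b h
      induction h with
      | refl => intro ha hb; rfl
      | tail hp hpq ih =>
          intro ha hb
          exact (ih ha (Finset.mem_coe.mpr hpq.2.1)).trans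
            (SimpleGraph.Adj.reachable (by exact hpq.1))
    rw [SimpleGraph.connected_iff]
    refine ⟨fun x y => ?_, ⟨⟨a₀, by simpa using ha₀⟩⟩⟩
    obtain ⟨a, ha⟩ := x
    obtain ⟨b, hb⟩ := y
    exact key (hr a (Finset.mem_coe.mp ha) b (Finset.mem_coe.mp hb)) ha hb

/-- connected sets: subsets of `A` containing `u`, of size ≤ m, connected -/
noncomputable def Kc (A : Finset (Fin n)) (u : Fin n) (m : ℕ) : Finset (Finset (Fin n)) :=
  A.powerset.filter (fun X => u ∈ X ∧ X.card ≤ m ∧ Conn G X)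

noncomputable def W (x : ℝ) (A : Finset (Fin n)) (u : Fin n) (m : ℕ) : ℝ :=
  ∑ X ∈ Kc G A u m, x ^ X.card

/-- allowed neighbors -/
def Nu (A : Finset (Fin n)) (u : Fin n) : Finset (Fin n) := G.neighborFinset u ∩ A

/-- component of w in X minus u -/
noncomputable def cpt (X : Finset (Fin n)) (u w : Fin n) : Finset (Fin n) :=
  (X.erase u).filter (fun y => RS G (X.erase u) w y)

noncomputable def gfun (A : Finset (Fin n)) (u : Fin n) (X : Finset (Fin n)) (w : Fin n) :
    Finset (Fin n) :=
  if w ∈ X.erase u ∧ ∀ w' ∈ cpt G X u w ∩ Nu G A u, w ≤ w' then cpt G X u w else ∅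

lemma cpt_subset {X : Finset (Fin n)} {u w : Fin n} : cpt G X u w ⊆ X.erase u :=
  Finset.filter_subset _ _

lemma gfun_subset {A X : Finset (Fin n)} {u w : Fin n} : gfun G A u X w ⊆ X.erase u := by
  unfold gfun; split
  · exact cpt_subset G
  · intro y hy; simp at hy

lemma mem_cpt_self {X : Finset (Fin n)} {u w : Fin n} (hw : w ∈ X.erase u) :
    w ∈ cpt G X u w := by
  simp only [cpt, Finset.mem_filter]
  exact ⟨hw, Relation.ReflTransGen.refl⟩

lemma cpt_congr {X : Finset (Fin n)} {u w w' : Fin n} (h : w' ∈ cpt G X u w) :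
    cpt G X u w' = cpt G X u w := by
  simp only [cpt, Finset.mem_filter] at h ⊢
  ext y
  simp only [Finset.mem_filter]
  exact ⟨fun hy => ⟨hy.1, h.2.trans hy.2⟩, fun hy => ⟨hy.1, (RS.symm G h.2).trans hy.2⟩⟩

lemma RS_strengthen {S : Finset (Fin n)} {w y : Fin n} (h : RS G S w y) :
    RS G (S.filter (fun z => RS G S w z)) w y := by
  induction h with
  | refl => exact Relation.ReflTransGen.refl
  | @tail p q hp hpq ih =>
      exact ih.tail ⟨hpq.1, Finset.mem_filter.mpr ⟨hpq.2.1, hp⟩,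
        Finset.mem_filter.mpr ⟨hpq.2.2, hp.tail hpq⟩⟩

lemma cpt_conn {X : Finset (Fin n)} {u w : Fin n} (hw : w ∈ X.erase u) :
    Conn G (cpt G X u w) := by
  refine ⟨⟨w, mem_cpt_self G hw⟩, fun a ha b hb => ?_⟩
  simp only [cpt, Finset.mem_filter] at ha hb
  have h1 : RS G (cpt G X u w) w a := RS_strengthen G ha.2
  have h2 : RS G (cpt G X u w) w b := RS_strengthen G hb.2
  exact (RS.symm G h1).trans h2

lemma reach_off_root {X : Finset (Fin n)} {u : Fin n} :
    ∀ {y : Fin n}, RS G X u y → y ≠ u →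
      ∃ w, G.Adj u w ∧ w ∈ X ∧ RS G (X.erase u) w y := by
  intro y h
  induction h with
  | refl => intro h; exact absurd rfl h
  | @tail p q hp hpq ih =>
      intro hqu
      by_cases hpu : p = u
      · subst hpu
        exact ⟨q, hpq.1, hpq.2.2, Relation.ReflTransGen.refl⟩
      · obtain ⟨w, h1, h2, h3⟩ := ih hpu
        exact ⟨w, h1, h2, h3.tail ⟨hpq.1, Finset.mem_erase.mpr ⟨hpu, hpq.2.1⟩,
          Finset.mem_erase.mpr ⟨hqu, hpq.2.2⟩⟩⟩

lemma decomp_eq {A X : Finset (Fin n)} {u : Fin n} (hXA : X ⊆ A) (hu : u ∈ X)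
    (hconn : Conn G X) :
    X = insert u ((Nu G A u).biUnion (gfun G A u X)) := by
  apply Finset.Subset.antisymm
  · intro y hy
    by_cases hyu : y = u
    · exact hyu ▸ Finset.mem_insert_self _ _
    refine Finset.mem_insert.mpr (Or.inr ?_)
    obtain ⟨w₀, hadj, hwX, hRS⟩ := reach_off_root G (hconn.2 u hu y hy) hyu
    have hw₀e : w₀ ∈ X.erase u := Finset.mem_erase.mpr ⟨fun h => G.irrefl (h ▸ hadj), hwX⟩
    have hyc : y ∈ cpt G X u w₀ := by
      simp only [cpt, Finset.mem_filter]
      exact ⟨Finset.mem_erase.mpr ⟨hyu, hy⟩, hRS⟩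
    set M := cpt G X u w₀ ∩ Nu G A u with hM
    have hw₀M : w₀ ∈ M := by
      simp only [hM, Finset.mem_inter, Nu, SimpleGraph.mem_neighborFinset]
      exact ⟨mem_cpt_self G hw₀e, hadj, hXA hwX⟩
    have hMne : M.Nonempty := ⟨w₀, hw₀M⟩
    set w := M.min' hMne with hw
    have hwM : w ∈ M := Finset.min'_mem _ _
    have hwc : w ∈ cpt G X u w₀ := (Finset.mem_inter.mp hwM).1
    have hcongr : cpt G X u w = cpt G X u w₀ := cpt_congr G hwc
    have hgw : gfun G A u X w = cpt G X u w := by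
      unfold gfun
      rw [if_pos]
      constructor
      · exact cpt_subset G hwc
      · intro w' hw'
        rw [hcongr] at hw'
        exact Finset.min'_le _ _ hw'
    refine Finset.mem_biUnion.mpr ⟨w, (Finset.mem_inter.mp hwM).2, ?_⟩
    rw [hgw, hcongr]; exact hyc
  · intro y hy
    rcases Finset.mem_insert.mp hy with h | h
    · exact h ▸ hu
    obtain ⟨w, _, hyg⟩ := Finset.mem_biUnion.mp h
    exact Finset.mem_of_mem_erase (gfun_subset G hyg)

lemma gfun_disj {A X : Finset (Fin n)} {u : Fin n} {w w' : Fin n} (hne : w ≠ w')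
    (hwN : w ∈ Nu G A u) (hw'N : w' ∈ Nu G A u) :
    Disjoint (gfun G A u X w) (gfun G A u X w') := by
  rw [Finset.disjoint_left]
  intro y hyw hyw'
  unfold gfun at hyw hyw'
  split at hyw; swap; · simp at hyw
  split at hyw'; swap; · simp at hyw'
  rename_i h1 h2
  have e1 : cpt G X u y = cpt G X u w := cpt_congr G hyw
  have e2 : cpt G X u y = cpt G X u w' := cpt_congr G hyw'
  have e3 : cpt G X u w = cpt G X u w' := e1 ▸ e2
  have hwc : w ∈ cpt G X u w := mem_cpt_self G h1.1
  have hw'c : w' ∈ cpt G X u w' := mem_cpt_self G h2.1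
  have le1 : w ≤ w' := h1.2 w' (Finset.mem_inter.mpr ⟨e3 ▸ hw'c, hw'N⟩)
  have le2 : w' ≤ w := h2.2 w (Finset.mem_inter.mpr ⟨e3.symm ▸ hwc, hwN⟩)
  exact hne (le_antisymm le1 le2)


lemma card_decomp {A X : Finset (Fin n)} {u : Fin n} (hXA : X ⊆ A) (hu : u ∈ X)
    (hconn : Conn G X) :
    X.card = 1 + ∑ w ∈ Nu G A u, (gfun G A u X w).card := by
  conv_lhs => rw [decomp_eq G hXA hu hconn]
  rw [Finset.card_insert_of_notMem, Finset.card_biUnion, add_comm]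
  · intro w hw w' hw' hne
    exact gfun_disj G hne hw hw'
  · intro hmem
    obtain ⟨w, _, hyg⟩ := Finset.mem_biUnion.mp hmem
    exact absurd (Finset.mem_erase.mp (gfun_subset G hyg)).1 (by simp)

lemma gfun_mem {A X : Finset (Fin n)} {u : Fin n} {w : Fin n} {m : ℕ}
    (hX : X ∈ Kc G A u (m + 1)) :
    gfun G A u X w ∈ insert (∅ : Finset (Fin n)) (Kc G (A.erase u) w m) := by
  simp only [Kc, Finset.mem_filter, Finset.mem_powerset] at hX
  obtain ⟨hXA, hu, hcard, hconn⟩ := hX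
  unfold gfun
  split
  · rename_i hcond
    refine Finset.mem_insert.mpr (Or.inr ?_)
    simp only [Kc, Finset.mem_filter, Finset.mem_powerset]
    refine ⟨?_, mem_cpt_self G hcond.1, ?_, cpt_conn G hcond.1⟩
    · exact (cpt_subset G).trans (Finset.erase_subset_erase u hXA)
    · have h1 : (cpt G X u w).card ≤ (X.erase u).card :=
        Finset.card_le_card (cpt_subset G)
      rw [Finset.card_erase_of_mem hu] at h1
      omega
  · exact Finset.mem_insert_self _ _

lemma empty_not_mem_Kc {A : Finset (Fin n)} {u : Fin n} {m : ℕ} :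
    (∅ : Finset (Fin n)) ∉ Kc G A u m := by
  simp [Kc]

lemma W_nonneg {x : ℝ} (hx : 0 ≤ x) (A : Finset (Fin n)) (u : Fin n) (m : ℕ) :
    0 ≤ W G x A u m :=
  Finset.sum_nonneg fun _ _ => pow_nonneg hx _

lemma step_bound {x : ℝ} (hx : 0 ≤ x) (A : Finset (Fin n)) (u : Fin n) (m : ℕ) :
    W G x A u (m + 1) ≤ x * ∏ w ∈ Nu G A u, (1 + W G x (A.erase u) w m) := by
  have hprod : ∀ w ∈ Nu G A u, 1 + W G x (A.erase u) w m
      = ∑ C ∈ insert ∅ (Kc G (A.erase u) w m), x ^ C.card := by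
    intro w _
    rw [Finset.sum_insert (empty_not_mem_Kc G)]
    simp [W]
  rw [Finset.prod_congr rfl hprod, Finset.prod_sum]
  -- now RHS = x * ∑ p ∈ pi, ∏ w ∈ attach, x ^ (p w.1 w.2).card
  rw [Finset.mul_sum]
  -- LHS: rewrite each term
  have hterm : ∀ X ∈ Kc G A u (m + 1),
      x ^ X.card = x * ∏ w ∈ (Nu G A u).attach, x ^ (gfun G A u X w.1).card := by
    intro X hX
    simp only [Kc, Finset.mem_filter, Finset.mem_powerset] at hX
    rw [Finset.prod_attach _ (fun w => x ^ (gfun G A u X w).card),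
      Finset.prod_pow_eq_pow_sum, ← pow_succ']
    rw [card_decomp G hX.1 hX.2.1 hX.2.2.2, add_comm]
  unfold W
  rw [Finset.sum_congr rfl hterm]
  -- injection
  set D := fun w : Fin n => insert (∅ : Finset (Fin n)) (Kc G (A.erase u) w m) with hD
  set Φ : Finset (Fin n) → (∀ a ∈ Nu G A u, Finset (Fin n)) :=
    fun X => fun w _ => gfun G A u X w with hΦ
  have himage : ∀ X ∈ Kc G A u (m + 1), Φ X ∈ (Nu G A u).pi D := by
    intro X hX
    rw [Finset.mem_pi]
    intro w _
    exact gfun_mem G hX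
  have hinj : ∀ X₁ ∈ Kc G A u (m + 1), ∀ X₂ ∈ Kc G A u (m + 1), Φ X₁ = Φ X₂ → X₁ = X₂ := by
    intro X₁ h₁ X₂ h₂ he
    simp only [Kc, Finset.mem_filter, Finset.mem_powerset] at h₁ h₂
    rw [decomp_eq G h₁.1 h₁.2.1 h₁.2.2.2, decomp_eq G h₂.1 h₂.2.1 h₂.2.2.2]
    congr 1
    apply Finset.biUnion_congr rfl
    intro w hw
    exact congrFun (congrFun he w) hw
  calc ∑ X ∈ Kc G A u (m + 1), x * ∏ w ∈ (Nu G A u).attach, x ^ (gfun G A u X w.1).card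
      = ∑ p ∈ (Kc G A u (m + 1)).image Φ, x * ∏ w ∈ (Nu G A u).attach, x ^ (p w.1 w.2).card := by
        rw [Finset.sum_image hinj]
    _ ≤ ∑ p ∈ (Nu G A u).pi D, x * ∏ w ∈ (Nu G A u).attach, x ^ (p w.1 w.2).card := by
        apply Finset.sum_le_sum_of_subset_of_nonneg
        · intro p hp
          obtain ⟨X, hX, rfl⟩ := Finset.mem_image.mp hp
          exact himage X hX
        · intro p _ _
          exact mul_nonneg hx (Finset.prod_nonneg fun _ _ => pow_nonneg hx _)

section Numeric

variable (d : ℕ)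

noncomputable def Bc : ℝ := ((d : ℝ) - 1) * (1 + 1 / ((d : ℝ) - 2)) ^ (d - 2)

noncomputable def rc : ℝ := 1 + 1 / ((d : ℝ) - 2)

variable (hd : 3 ≤ d)
include hd

lemma hd2 : (1 : ℝ) ≤ (d : ℝ) - 2 := by
  have : (3 : ℝ) ≤ (d : ℝ) := by exact_mod_cast hd
  linarith

lemma rc_ge_one : 1 ≤ rc d := by
  have := hd2 d hd
  have h0 : 0 < (d : ℝ) - 2 := by linarith
  have : 0 ≤ 1 / ((d : ℝ) - 2) := by positivity
  simp only [rc]; linarith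

lemma Bc_pos : 0 < Bc d := by
  have := hd2 d hd
  have h1 : (0:ℝ) < (d : ℝ) - 1 := by linarith
  have h2 : (0:ℝ) < 1 + 1 / ((d : ℝ) - 2) := by
    have := rc_ge_one d hd; simp only [rc] at this; linarith
  exact mul_pos h1 (pow_pos h2 _)

lemma key_identity : (Bc d)⁻¹ * rc d ^ (d - 1) = 1 / ((d : ℝ) - 2) := by
  have h2 := hd2 d hd
  have hc : (0:ℝ) < (d : ℝ) - 1 := by linarith
  have hc2 : (0:ℝ) < (d : ℝ) - 2 := by linarith
  have hr : 0 < rc d := lt_of_lt_of_le one_pos (rc_ge_one d hd)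
  have hpow : rc d ^ (d - 1) = rc d ^ (d - 2) * rc d := by
    rw [← pow_succ]
    congr 1
    omega
  have hrc : rc d = ((d : ℝ) - 1) / ((d : ℝ) - 2) := by
    simp only [rc]; field_simp; ring
  rw [Bc, hpow, rc]
  rw [show (1 + 1 / ((d : ℝ) - 2)) = rc d from rfl]
  have hrpow : (0:ℝ) < rc d ^ (d - 2) := pow_pos hr _
  field_simp [hrc]
  rw [hrc]
  field_simp

variable {G}
variable (hdeg : ∀ v, G.degree v ≤ d)
include hdeg

omit hd hdeg in
lemma Nu_card_erase {A : Finset (Fin n)} {u w : Fin n} (h : G.Adj u w) :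
    (Nu G (A.erase u) w).card ≤ G.degree w - 1 := by
  have hsub : Nu G (A.erase u) w ⊆ (G.neighborFinset w).erase u := by
    intro y hy
    simp only [Nu, Finset.mem_inter, Finset.mem_erase] at hy ⊢
    exact ⟨hy.2.1, hy.1⟩
  have := Finset.card_le_card hsub
  rwa [Finset.card_erase_of_mem (by simpa using h.symm), SimpleGraph.card_neighborFinset_eq_degree] at this

lemma main_bound : ∀ (m : ℕ) (A : Finset (Fin n)) (u : Fin n),
    (Nu G A u).card ≤ d - 1 → W G (Bc d)⁻¹ A u m ≤ 1 / ((d : ℝ) - 2) := by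
  have hd2' := hd2 d hd
  have hBpos := Bc_pos d hd
  have hx : (0:ℝ) ≤ (Bc d)⁻¹ := by positivity
  have hr1 := rc_ge_one d hd
  intro m
  induction m with
  | zero =>
      intro A u _
      have : Kc G A u 0 = ∅ := by
        ext X
        simp only [Kc, Finset.mem_filter, Finset.mem_powerset, Finset.notMem_empty,
          iff_false]
        rintro ⟨-, huX, hc, -⟩
        have : X = ∅ := Finset.card_eq_zero.mp (Nat.le_zero.mp hc)
        subst this; simp at huX
      rw [W, this]
      simp only [Finset.sum_empty]
      exact one_div_nonneg.mpr (by linarith)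
  | succ m ih =>
      intro A u hNu
      calc W G (Bc d)⁻¹ A u (m + 1)
          ≤ (Bc d)⁻¹ * ∏ w ∈ Nu G A u, (1 + W G (Bc d)⁻¹ (A.erase u) w m) :=
            step_bound G hx A u m
        _ ≤ (Bc d)⁻¹ * ∏ _w ∈ Nu G A u, rc d := by
            apply mul_le_mul_of_nonneg_left _ hx
            apply Finset.prod_le_prod
            · intro w _
              have := W_nonneg G hx (A.erase u) w m
              linarith
            · intro w hw
              have hadj : G.Adj u w := by
                simp only [Nu, Finset.mem_inter, SimpleGraph.mem_neighborFinset] at hw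
                exact hw.1
              have hcard : (Nu G (A.erase u) w).card ≤ d - 1 := by
                have h1 := Nu_card_erase (A := A) hadj
                have h2 := hdeg w
                omega
              have := ih (A.erase u) w hcard
              simp only [rc]
              linarith
        _ = (Bc d)⁻¹ * rc d ^ (Nu G A u).card := by rw [Finset.prod_const]
        _ ≤ (Bc d)⁻¹ * rc d ^ (d - 1) := by
            apply mul_le_mul_of_nonneg_left _ hx
            exact pow_le_pow_right₀ hr1 hNu
        _ = 1 / ((d : ℝ) - 2) := key_identity d hd

lemma top_bound (v : Fin n) (s : ℕ) :
    W G (Bc d)⁻¹ Finset.univ v s ≤ (Bc d)⁻¹ * rc d ^ d := by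
  have hBpos := Bc_pos d hd
  have hx : (0:ℝ) ≤ (Bc d)⁻¹ := by positivity
  have hr1 := rc_ge_one d hd
  cases s with
  | zero =>
      have : Kc G Finset.univ v 0 = ∅ := by
        ext X
        simp only [Kc, Finset.mem_filter, Finset.mem_powerset, Finset.notMem_empty,
          iff_false]
        rintro ⟨-, huX, hc, -⟩
        have : X = ∅ := Finset.card_eq_zero.mp (Nat.le_zero.mp hc)
        subst this; simp at huX
      rw [W, this]
      simp only [Finset.sum_empty]
      positivity
  | succ m =>
      calc W G (Bc d)⁻¹ Finset.univ v (m + 1)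
          ≤ (Bc d)⁻¹ * ∏ w ∈ Nu G Finset.univ v, (1 + W G (Bc d)⁻¹ (Finset.univ.erase v) w m) :=
            step_bound G hx Finset.univ v m
        _ ≤ (Bc d)⁻¹ * ∏ _w ∈ Nu G Finset.univ v, rc d := by
            apply mul_le_mul_of_nonneg_left _ hx
            apply Finset.prod_le_prod
            · intro w _
              have := W_nonneg G hx (Finset.univ.erase v) w m
              linarith
            · intro w hw
              have hadj : G.Adj v w := by
                simp only [Nu, Finset.mem_inter, SimpleGraph.mem_neighborFinset] at hw
                exact hw.1
              have hcard : (Nu G (Finset.univ.erase v) w).card ≤ d - 1 := by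
                have h1 := Nu_card_erase (A := (Finset.univ : Finset (Fin n))) hadj
                have h2 := hdeg w
                omega
              have := main_bound d hd hdeg m (Finset.univ.erase v) w hcard
              simp only [rc]
              linarith
        _ = (Bc d)⁻¹ * rc d ^ (Nu G Finset.univ v).card := by rw [Finset.prod_const]
        _ ≤ (Bc d)⁻¹ * rc d ^ d := by
            apply mul_le_mul_of_nonneg_left _ hx
            apply pow_le_pow_right₀ hr1
            calc (Nu G Finset.univ v).card ≤ (G.neighborFinset v).card :=
                  Finset.card_le_card Finset.inter_subset_left
              _ ≤ d := hdeg v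

end Numeric

section Count

noncomputable def CC (G : SimpleGraph (Fin n)) [DecidableRel G.Adj] (s : ℕ) :
    Finset (Finset (Fin n)) :=
  Finset.univ.filter (fun X => X.card = s ∧ Conn G X)

lemma count_le (d : ℕ) (hd : 3 ≤ d) (v : Fin n) (s : ℕ) :
    (((CC G s).filter (fun X => v ∈ X)).card : ℝ) * ((Bc d)⁻¹) ^ s
      ≤ W G (Bc d)⁻¹ Finset.univ v s := by
  have hsub : (CC G s).filter (fun X => v ∈ X) ⊆ Kc G Finset.univ v s := by
    intro X hX
    simp only [CC, Kc, Finset.mem_filter, Finset.mem_univ, true_and,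
      Finset.mem_powerset] at hX ⊢
    exact ⟨Finset.subset_univ X, hX.2, le_of_eq hX.1.1, hX.1.2⟩
  have hterm : ∀ X ∈ (CC G s).filter (fun X => v ∈ X),
      ((Bc d)⁻¹ : ℝ) ^ s = ((Bc d)⁻¹) ^ X.card := by
    intro X hX
    simp only [CC, Finset.mem_filter, Finset.mem_univ, true_and] at hX
    rw [hX.1.1]
  have hx : (0:ℝ) ≤ (Bc d)⁻¹ := by
    have := Bc_pos d hd; positivity
  calc (((CC G s).filter (fun X => v ∈ X)).card : ℝ) * ((Bc d)⁻¹) ^ s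
      = ∑ X ∈ (CC G s).filter (fun X => v ∈ X), ((Bc d)⁻¹ : ℝ) ^ X.card := by
        rw [← Finset.sum_congr rfl hterm, Finset.sum_const, nsmul_eq_mul]
    _ ≤ ∑ X ∈ Kc G Finset.univ v s, ((Bc d)⁻¹ : ℝ) ^ X.card := by
        apply Finset.sum_le_sum_of_subset_of_nonneg hsub
        intro X _ _
        exact pow_nonneg hx _
    _ = W G (Bc d)⁻¹ Finset.univ v s := rfl

lemma double_count (G : SimpleGraph (Fin n)) [DecidableRel G.Adj] (s : ℕ) :
    ∑ v : Fin n, ((CC G s).filter (fun X => v ∈ X)).card = s * (CC G s).card := by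
  have h1 : ∀ v : Fin n, ((CC G s).filter (fun X => v ∈ X)).card
      = ∑ X ∈ CC G s, if v ∈ X then 1 else 0 := fun v => Finset.card_filter _ _
  simp only [h1]
  rw [Finset.sum_comm]
  have h2 : ∀ X ∈ CC G s, (∑ v : Fin n, if v ∈ X then 1 else 0) = s := by
    intro X hX
    simp only [CC, Finset.mem_filter, Finset.mem_univ, true_and] at hX
    rw [Finset.sum_ite_mem, Finset.univ_inter, Finset.sum_const, ← hX.1]
    simp
  rw [Finset.sum_congr rfl h2, Finset.sum_const, smul_eq_mul, mul_comm]

end Count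

lemma xrd_le_two (d : ℕ) (hd : 3 ≤ d) : (Bc d)⁻¹ * rc d ^ d ≤ 2 := by
  have h2 := hd2 d hd
  have key := key_identity d hd
  have hpow : rc d ^ d = rc d ^ (d - 1) * rc d := by
    rw [← pow_succ]; congr 1; omega
  have h1 : 1 / ((d : ℝ) - 2) ≤ 1 := by
    rw [div_le_one (by linarith)]; linarith
  have hrc2 : rc d ≤ 2 := by simp only [rc]; linarith
  have hrc0 : (0:ℝ) ≤ rc d := le_trans zero_le_one (rc_ge_one d hd)
  calc (Bc d)⁻¹ * rc d ^ d = ((Bc d)⁻¹ * rc d ^ (d - 1)) * rc d := by rw [hpow]; ring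
    _ = (1 / ((d : ℝ) - 2)) * rc d := by rw [key]
    _ ≤ 1 * 2 := mul_le_mul h1 hrc2 hrc0 zero_le_one
    _ ≤ 2 := by norm_num

lemma Bc_ge_one (d : ℕ) (hd : 3 ≤ d) : 1 ≤ Bc d := by
  have h2 := hd2 d hd
  have ha : 1 ≤ ((d:ℝ) - 1) := by linarith
  have hb : (1:ℝ) ≤ (1 + 1 / ((d:ℝ) - 2)) ^ (d - 2) := one_le_pow₀ (rc_ge_one d hd)
  have := mul_le_mul ha hb zero_le_one (by linarith)
  simpa [Bc] using this

lemma CC_card_le_choose (G : SimpleGraph (Fin n)) [DecidableRel G.Adj] (s : ℕ) :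
    (CC G s).card ≤ n.choose s := by
  have hsub : CC G s ⊆ Finset.univ.powersetCard s := by
    intro X hX
    simp only [CC, Finset.mem_filter, Finset.mem_univ, true_and] at hX
    simp [Finset.mem_powersetCard, hX.1]
  calc (CC G s).card ≤ (Finset.univ.powersetCard s).card := Finset.card_le_card hsub
    _ = n.choose s := by simp [Finset.card_powersetCard]

/-- In a finite graph of maximum degree `d ≥ 3` on `n` vertices, the total number
of connected vertex subsets of size `s` is at most
`n * ((d-1) * (1 + 1/(d-2))^(d-2))^s`. -/
theorem stmt1 {n : ℕ} (G : SimpleGraph (Fin n)) [DecidableRel G.Adj]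
    (d : ℕ) (hd : 3 ≤ d) (hdeg : ∀ v, G.degree v ≤ d) (s : ℕ) :
    (Set.ncard {X : Finset (Fin n) |
        X.card = s ∧ (G.induce (X : Set (Fin n))).Connected} : ℝ) ≤
      n * (((d : ℝ) - 1) * (1 + 1 / ((d : ℝ) - 2)) ^ (d - 2)) ^ s := by
  have hset : {X : Finset (Fin n) | X.card = s ∧ (G.induce (X : Set (Fin n))).Connected}
      = ↑(CC G s) := by
    ext X
    simp only [Set.mem_setOf_eq, CC, Finset.coe_filter, Finset.mem_univ, true_and,
      conn_iff G X]
  rw [hset, Set.ncard_coe_finset]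
  have hBrw : (((d : ℝ) - 1) * (1 + 1 / ((d : ℝ) - 2)) ^ (d - 2)) = Bc d := rfl
  rw [hBrw]
  have hBpos := Bc_pos d hd
  have hB1 := Bc_ge_one d hd
  match s with
  | 0 =>
      have : CC G 0 = ∅ := by
        ext X
        simp only [CC, Finset.mem_filter, Finset.mem_univ, true_and,
          Finset.notMem_empty, iff_false]
        rintro ⟨hc, ⟨⟨y, hy⟩, -⟩⟩
        rw [Finset.card_eq_zero] at hc
        subst hc; simp at hy
      rw [this]
      simp
  | 1 =>
      have h1 : ((CC G 1).card : ℝ) ≤ n := by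
        have := CC_card_le_choose G 1
        rw [Nat.choose_one_right] at this
        exact_mod_cast this
      calc ((CC G 1).card : ℝ) ≤ n := h1
        _ ≤ n * Bc d ^ 1 := by nlinarith [Nat.cast_nonneg (α := ℝ) n]
  | (m + 2) =>
      set s' := m + 2 with hs'
      have hvbound : ∀ v : Fin n,
          (((CC G s').filter (fun X => v ∈ X)).card : ℝ) ≤ Bc d ^ s' * ((Bc d)⁻¹ * rc d ^ d) := by
        intro v
        have h1 := count_le G d hd v s'
        have h2 := top_bound d hd hdeg v s'
        have h3 : (((CC G s').filter (fun X => v ∈ X)).card : ℝ) * ((Bc d)⁻¹) ^ s'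
            ≤ (Bc d)⁻¹ * rc d ^ d := le_trans h1 h2
        have h4 : (0:ℝ) < Bc d ^ s' := pow_pos hBpos _
        calc (((CC G s').filter (fun X => v ∈ X)).card : ℝ)
            = ((((CC G s').filter (fun X => v ∈ X)).card : ℝ) * ((Bc d)⁻¹) ^ s') * Bc d ^ s' := by
              rw [mul_assoc, ← mul_pow, inv_mul_cancel₀ (ne_of_gt hBpos)]
              simp
          _ ≤ ((Bc d)⁻¹ * rc d ^ d) * Bc d ^ s' := by
              apply mul_le_mul_of_nonneg_right h3 (le_of_lt h4)
          _ = Bc d ^ s' * ((Bc d)⁻¹ * rc d ^ d) := by ring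
      have hdc := double_count G s'
      have hdc' : ((s' : ℝ)) * ((CC G s').card : ℝ)
          = ∑ v : Fin n, (((CC G s').filter (fun X => v ∈ X)).card : ℝ) := by
        rw [← Nat.cast_sum]
        rw [hdc]
        push_cast
        ring
      have hsum : ((s' : ℝ)) * ((CC G s').card : ℝ)
          ≤ n * (Bc d ^ s' * ((Bc d)⁻¹ * rc d ^ d)) := by
        rw [hdc']
        calc ∑ v : Fin n, (((CC G s').filter (fun X => v ∈ X)).card : ℝ)
            ≤ ∑ _v : Fin n, Bc d ^ s' * ((Bc d)⁻¹ * rc d ^ d) :=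
              Finset.sum_le_sum (fun v _ => hvbound v)
          _ = n * (Bc d ^ s' * ((Bc d)⁻¹ * rc d ^ d)) := by
              rw [Finset.sum_const, Finset.card_univ, Fintype.card_fin, nsmul_eq_mul]
      have hxr := xrd_le_two d hd
      have hs2 : (2:ℝ) ≤ (s' : ℝ) := by
        have : 2 ≤ s' := by omega
        exact_mod_cast this
      have hspos : (0:ℝ) < (s' : ℝ) := by linarith
      rw [← mul_le_mul_iff_right₀ hspos]
      calc (s' : ℝ) * ((CC G s').card : ℝ)
          ≤ n * (Bc d ^ s' * ((Bc d)⁻¹ * rc d ^ d)) := hsum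
        _ ≤ n * (Bc d ^ s' * (s' : ℝ)) := by
            apply mul_le_mul_of_nonneg_left _ (Nat.cast_nonneg n)
            apply mul_le_mul_of_nonneg_left _ (le_of_lt (pow_pos hBpos _))
            linarith
        _ = (s' : ℝ) * (n * Bc d ^ s') := by ring
end
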